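/- arXiv:1203.0424 — 3 statements merged into one kernel-verified Lean document; each statement's English description precedes it below -/
import Mathlib

section
/- In a C-category, for a morphism i : B → A the following are equivalent: (a) there is a retraction r : CA → CB with r(Ci) = 1 (NEP); (b) every nullhomotopic morphism f : B → X has a nullhomotopic extension along i; (c) every nullhomotopic morphism f : B → X has an extension along i; (d) the inclusion κ : B → CB has an extension along i. -/
set_option linter.unusedVariables false
/-!
Formalization of "Generalized Homotopy theory in Categories with a Natural Cone"
(Díaz, García Calcines).  A `CCat 𝒞` packages the data of a category with a natural
cone: a class of cofibrations, a cone functor `C`, natural transformations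
`κ : 1 → C` and `ρ : CC → C`, together with chosen cofibrated pushouts, satisfying
the axioms C1–C4 of the paper.
-/

open CategoryTheory CategoryTheory.Limits

universe v u

/-- A category with a natural cone (C-category). -/
structure CCat (𝒞 : Type u) [Category.{v} 𝒞] where
  /-- the class of cofibrations -/
  cof : ∀ {X Y : 𝒞}, (X ⟶ Y) → Prop
  /-- the cone functor -/
  cone : 𝒞 ⥤ 𝒞
  /-- the inclusion `κ : 1 → C` -/
  κ : 𝟭 𝒞 ⟶ cone
  /-- the projection `ρ : CC → C` -/
  ρ : cone ⋙ cone ⟶ cone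
  -- C1, cone axiom
  ρ_κ_cone : ∀ X : 𝒞, κ.app (cone.obj X) ≫ ρ.app X = 𝟙 (cone.obj X)
  ρ_cone_κ : ∀ X : 𝒞, cone.map (κ.app X) ≫ ρ.app X = 𝟙 (cone.obj X)
  ρ_assoc : ∀ X : 𝒞, ρ.app (cone.obj X) ≫ ρ.app X = cone.map (ρ.app X) ≫ ρ.app X
  -- C2, pushout axiom: chosen pushouts of cofibrations along arbitrary morphisms
  P : ∀ {B A X : 𝒞} (i : B ⟶ A) (f : B ⟶ X), cof i → 𝒞
  Pbar : ∀ {B A X : 𝒞} (i : B ⟶ A) (f : B ⟶ X) (hi : cof i), A ⟶ P i f hi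
  Pincl : ∀ {B A X : 𝒞} (i : B ⟶ A) (f : B ⟶ X) (hi : cof i), X ⟶ P i f hi
  P_isPushout : ∀ {B A X : 𝒞} (i : B ⟶ A) (f : B ⟶ X) (hi : cof i),
    IsPushout i f (Pbar i f hi) (Pincl i f hi)
  cof_Pincl : ∀ {B A X : 𝒞} (i : B ⟶ A) (f : B ⟶ X) (hi : cof i), cof (Pincl i f hi)
  cone_isPushout : ∀ {B A X : 𝒞} (i : B ⟶ A) (f : B ⟶ X) (hi : cof i),
    IsPushout (cone.map i) (cone.map f) (cone.map (Pbar i f hi)) (cone.map (Pincl i f hi))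
  -- C3, cofibration axiom
  cof_id : ∀ X : 𝒞, cof (𝟙 X)
  cof_κ : ∀ X : 𝒞, cof (κ.app X)
  cof_comp : ∀ {X Y Z : 𝒞} (f : X ⟶ Y) (g : Y ⟶ Z), cof f → cof g → cof (f ≫ g)
  /-- nullhomotopy extension property: a retraction for the cone of each cofibration -/
  nep : ∀ {B A : 𝒞} (i : B ⟶ A), cof i →
    ∃ r : cone.obj A ⟶ cone.obj B, cone.map i ≫ r = 𝟙 (cone.obj B)
  -- C4, relative cone axiom: `i₁ = {Ci, κ} : Σ^i → CA` is a cofibration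
  cof_rel : ∀ {B A : 𝒞} (i : B ⟶ A), cof i →
    cof ((P_isPushout (κ.app B) i (cof_κ B)).desc (cone.map i) (κ.app A)
      (by simpa using (κ.naturality i).symm))

namespace CCat

variable {𝒞 : Type u} [Category.{v} 𝒞]

/-- The relative cone `Σ^i = P{κ, i}` of a morphism `i : B ⟶ A`. -/
def SigmaObj (D : CCat 𝒞) {B A : 𝒞} (i : B ⟶ A) : 𝒞 :=
  D.P (D.κ.app B) i (D.cof_κ B)

/-- The leg `CB ⟶ Σ^i` of the relative cone. -/
def sigInl (D : CCat 𝒞) {B A : 𝒞} (i : B ⟶ A) : D.cone.obj B ⟶ D.SigmaObj i :=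
  D.Pbar (D.κ.app B) i (D.cof_κ B)

/-- The leg `A ⟶ Σ^i` of the relative cone (the induced cofibration `κ̄`). -/
def sigInr (D : CCat 𝒞) {B A : 𝒞} (i : B ⟶ A) : A ⟶ D.SigmaObj i :=
  D.Pincl (D.κ.app B) i (D.cof_κ B)

/-- The morphism `i₁ = {Ci, κ} : Σ^i ⟶ CA`. -/
noncomputable def i1 (D : CCat 𝒞) {B A : 𝒞} (i : B ⟶ A) : D.SigmaObj i ⟶ D.cone.obj A :=
  (D.P_isPushout (D.κ.app B) i (D.cof_κ B)).desc (D.cone.map i) (D.κ.app A)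
    (by simpa using (D.κ.naturality i).symm)

theorem cof_i1 (D : CCat 𝒞) {B A : 𝒞} (i : B ⟶ A) (hi : D.cof i) : D.cof (D.i1 i) :=
  D.cof_rel i hi

/-- Iterated cone `CⁿA`. -/
def cpow (D : CCat 𝒞) (A : 𝒞) : ℕ → 𝒞
  | 0 => A
  | n + 1 => D.cone.obj (cpow D A n)

/-- Iterated projection `ρⁿ : Cⁿ⁺¹A ⟶ CA`. -/
def rpow (D : CCat 𝒞) (A : 𝒞) : ∀ n : ℕ, D.cpow A (n + 1) ⟶ D.cone.obj A
  | 0 => 𝟙 _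
  | n + 1 => D.ρ.app (D.cpow A n) ≫ rpow D A n

/-- `Cⁿf` on iterated cones. -/
def cpowMap (D : CCat 𝒞) {A A' : 𝒞} (f : A ⟶ A') : ∀ n : ℕ, D.cpow A n ⟶ D.cpow A' n
  | 0 => f
  | n + 1 => D.cone.map (cpowMap D f n)

/-- `Cⁿκ_A : CⁿA ⟶ Cⁿ⁺¹A`. -/
def cpowKappa (D : CCat 𝒞) (A : 𝒞) : ∀ n : ℕ, D.cpow A n ⟶ D.cpow A (n + 1)
  | 0 => D.κ.app A
  | n + 1 => D.cone.map (cpowKappa D A n)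

/-- The iterated relative cone construction `i_n` for `i : B ⟶ CA`
(`i_0 = i`, `i_{n+1} = (i_n)₁`), together with its domain. -/
noncomputable def iterCof1 (D : CCat 𝒞) {B A : 𝒞} (i : B ⟶ D.cone.obj A) :
    ∀ n : ℕ, Σ S : 𝒞, S ⟶ D.cone.obj (D.cpow A n)
  | 0 => ⟨B, i⟩
  | n + 1 => ⟨D.SigmaObj (iterCof1 D i n).2, D.i1 (iterCof1 D i n).2⟩

theorem cof_iterCof1 (D : CCat 𝒞) {B A : 𝒞} (i : B ⟶ D.cone.obj A) (hi : D.cof i) :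
    ∀ n : ℕ, D.cof (D.iterCof1 i n).2
  | 0 => hi
  | n + 1 => D.cof_i1 _ (cof_iterCof1 D i hi n)

/-- The iterated relative cone construction for `i : B ⟶ C(CA)`, keeping track of two
outer cones. -/
noncomputable def iterCof2 (D : CCat 𝒞) {B A : 𝒞} (i : B ⟶ D.cone.obj (D.cone.obj A)) :
    ∀ n : ℕ, Σ S : 𝒞, S ⟶ D.cone.obj (D.cone.obj (D.cpow A n))
  | 0 => ⟨B, i⟩
  | n + 1 => ⟨D.SigmaObj (iterCof2 D i n).2, D.i1 (iterCof2 D i n).2⟩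

theorem cof_iterCof2 (D : CCat 𝒞) {B A : 𝒞} (i : B ⟶ D.cone.obj (D.cone.obj A))
    (hi : D.cof i) : ∀ n : ℕ, D.cof (D.iterCof2 i n).2
  | 0 => hi
  | n + 1 => D.cof_i1 _ (cof_iterCof2 D i hi n)

/-- A morphism `f` is nullhomotopic if it extends over `κ`. -/
def Nullhomotopic (D : CCat 𝒞) {X Y : 𝒞} (f : X ⟶ Y) : Prop :=
  ∃ F : D.cone.obj X ⟶ Y, D.κ.app X ≫ F = f

/-- An object is contractible when its identity is nullhomotopic. -/
def Contractible (D : CCat 𝒞) (X : 𝒞) : Prop :=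
  D.Nullhomotopic (𝟙 X)

/-- `F : C²A ⟶ X` is a homotopy from `f₀` to `f₁` relative to `i : B ⟶ CA`, i.e.
`F` is an extension of `{f₀ρ(Ci), f₁}` over `i₁` (expressed on the legs of `Σ^i`). -/
def IsRelHomotopy (D : CCat 𝒞) {B A X : 𝒞} (i : B ⟶ D.cone.obj A)
    (f₀ f₁ : D.cone.obj A ⟶ X) (F : D.cone.obj (D.cone.obj A) ⟶ X) : Prop :=
  D.cone.map i ≫ F = D.cone.map i ≫ D.ρ.app A ≫ f₀ ∧ D.κ.app (D.cone.obj A) ≫ F = f₁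

/-- `f₀ ≃ f₁` rel `i`. -/
def HomotopicRel (D : CCat 𝒞) {B A X : 𝒞} (i : B ⟶ D.cone.obj A)
    (f₀ f₁ : D.cone.obj A ⟶ X) : Prop :=
  ∃ F, D.IsRelHomotopy i f₀ f₁ F

/-- `μ : C²A ⟶ CP{i,i}` is an extension of `κ(ρ(Ci) ∪ 1)` relative to `i₁`
(expressed on the legs of `Σ^i`). -/
def IsMu (D : CCat 𝒞) {B A : 𝒞} (i : B ⟶ D.cone.obj A) (hi : D.cof i)
    (μ : D.cone.obj (D.cone.obj A) ⟶ D.cone.obj (D.P i i hi)) : Prop :=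
  D.cone.map i ≫ μ =
      D.cone.map i ≫ D.ρ.app A ≫ D.Pbar i i hi ≫ D.κ.app (D.P i i hi) ∧
    D.κ.app (D.cone.obj A) ≫ μ = D.Pincl i i hi ≫ D.κ.app (D.P i i hi)

/-- `K = {u, v} : CP{i,i} ⟶ X` (expressed on the legs of `CP{i,i} = P{Ci,Ci}`). -/
def IsQDesc (D : CCat 𝒞) {B A X : 𝒞} (i : B ⟶ D.cone.obj A) (hi : D.cof i)
    (u v : D.cone.obj (D.cone.obj A) ⟶ X) (K : D.cone.obj (D.P i i hi) ⟶ X) : Prop :=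
  D.cone.map (D.Pbar i i hi) ≫ K = u ∧ D.cone.map (D.Pincl i i hi) ≫ K = v

/-- `R = F̄ = {F, f₀ρ}μ`, the inverse operation of the homotopy groupoid. -/
def IsBar (D : CCat 𝒞) {B A X : 𝒞} (i : B ⟶ D.cone.obj A) (hi : D.cof i)
    (μ : D.cone.obj (D.cone.obj A) ⟶ D.cone.obj (D.P i i hi))
    (f₀ : D.cone.obj A ⟶ X) (F R : D.cone.obj (D.cone.obj A) ⟶ X) : Prop :=
  ∃ K, D.IsQDesc i hi F (D.ρ.app A ≫ f₀) K ∧ R = μ ≫ K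

/-- `S = F * G = {F̄, G}μ`, the composition operation of the homotopy groupoid. -/
def IsStar (D : CCat 𝒞) {B A X : 𝒞} (i : B ⟶ D.cone.obj A) (hi : D.cof i)
    (μ : D.cone.obj (D.cone.obj A) ⟶ D.cone.obj (D.P i i hi))
    (f₀ : D.cone.obj A ⟶ X) (F G S : D.cone.obj (D.cone.obj A) ⟶ X) : Prop :=
  ∃ R K, D.IsBar i hi μ f₀ F R ∧ D.IsQDesc i hi R G K ∧ S = μ ≫ K

end CCat

/-- equivalent formulations of the nullhomotopy extension property for a
morphism `i : B ⟶ A`: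
(a) there is a retraction `r : CA ⟶ CB` with `(Ci) ≫ r = 1`;
(b) every nullhomotopic `f : B ⟶ X` has a nullhomotopic extension along `i`;
(c) every nullhomotopic `f : B ⟶ X` has an extension along `i`;
(d) `κ : B ⟶ CB` has an extension along `i`. -/
theorem stmt_3 {𝒞 : Type u} [Category.{v} 𝒞] (D : CCat 𝒞) {B A : 𝒞} (i : B ⟶ A) :
    ((∃ r : D.cone.obj A ⟶ D.cone.obj B, D.cone.map i ≫ r = 𝟙 (D.cone.obj B)) ↔
      (∀ (X : 𝒞) (f : B ⟶ X), D.Nullhomotopic f →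
        ∃ g : A ⟶ X, D.Nullhomotopic g ∧ i ≫ g = f)) ∧
    ((∀ (X : 𝒞) (f : B ⟶ X), D.Nullhomotopic f →
        ∃ g : A ⟶ X, D.Nullhomotopic g ∧ i ≫ g = f) ↔
      (∀ (X : 𝒞) (f : B ⟶ X), D.Nullhomotopic f → ∃ g : A ⟶ X, i ≫ g = f)) ∧
    ((∀ (X : 𝒞) (f : B ⟶ X), D.Nullhomotopic f → ∃ g : A ⟶ X, i ≫ g = f) ↔
      (∃ g : A ⟶ D.cone.obj B, i ≫ g = D.κ.app B)) := by
  have hab : (∃ r : D.cone.obj A ⟶ D.cone.obj B, D.cone.map i ≫ r = 𝟙 (D.cone.obj B)) →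
      (∀ (X : 𝒞) (f : B ⟶ X), D.Nullhomotopic f →
        ∃ g : A ⟶ X, D.Nullhomotopic g ∧ i ≫ g = f) := by
    rintro ⟨r, hr⟩ X f ⟨F, hF⟩
    refine ⟨D.κ.app A ≫ r ≫ F, ⟨r ≫ F, rfl⟩, ?_⟩
    have := D.κ.naturality i
    simp only [Functor.id_map] at this
    rw [← Category.assoc, this, Category.assoc, ← Category.assoc (D.cone.map i), hr,
      Category.id_comp, hF]
  have hbc : (∀ (X : 𝒞) (f : B ⟶ X), D.Nullhomotopic f →
        ∃ g : A ⟶ X, D.Nullhomotopic g ∧ i ≫ g = f) →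
      (∀ (X : 𝒞) (f : B ⟶ X), D.Nullhomotopic f → ∃ g : A ⟶ X, i ≫ g = f) := by
    intro h X f hf
    obtain ⟨g, _, hg⟩ := h X f hf
    exact ⟨g, hg⟩
  have hcd : (∀ (X : 𝒞) (f : B ⟶ X), D.Nullhomotopic f → ∃ g : A ⟶ X, i ≫ g = f) →
      (∃ g : A ⟶ D.cone.obj B, i ≫ g = D.κ.app B) :=
    fun h => h _ (D.κ.app B) ⟨𝟙 _, Category.comp_id _⟩
  have hda : (∃ g : A ⟶ D.cone.obj B, i ≫ g = D.κ.app B) →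
      (∃ r : D.cone.obj A ⟶ D.cone.obj B, D.cone.map i ≫ r = 𝟙 (D.cone.obj B)) := by
    rintro ⟨g, hg⟩
    refine ⟨D.cone.map g ≫ D.ρ.app B, ?_⟩
    rw [← Category.assoc, ← D.cone.map_comp, hg, D.ρ_cone_κ]
  exact ⟨⟨hab, fun h => hda (hcd (hbc h))⟩,
    ⟨hbc, fun h => hab (hda (hcd h))⟩,
    ⟨hcd, fun h => hbc (hab (hda h))⟩⟩
end

section
/- In a C-category, the homotopy relation relative to a cofibration i : B ↣ CA is an equivalence relation on the set of morphisms CA → X extending a fixed u = f i. -/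
set_option linter.unusedVariables false
/-!
Formalization of "Generalized Homotopy theory in Categories with a Natural Cone"
(Díaz, García Calcines).  A `CCat 𝒞` packages the data of a category with a natural
cone: a class of cofibrations, a cone functor `C`, natural transformations
`κ : 1 → C` and `ρ : CC → C`, together with chosen cofibrated pushouts, satisfying
the axioms C1–C4 of the paper.
-/

open CategoryTheory CategoryTheory.Limits

universe v u

namespace CCat

variable {𝒞 : Type u} [Category.{v} 𝒞]

/-- Any morphism into a cone extends along a cofibration. -/
theorem extend_to_cone (D : CCat 𝒞) {S T Y : 𝒞} (j : S ⟶ T) (hj : D.cof j)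
    (g : S ⟶ D.cone.obj Y) : ∃ E : T ⟶ D.cone.obj Y, j ≫ E = g := by
  obtain ⟨r, hr⟩ := D.nep j hj
  refine ⟨D.κ.app T ≫ r ≫ D.cone.map g ≫ D.ρ.app Y, ?_⟩
  have h1 : j ≫ D.κ.app T = D.κ.app S ≫ D.cone.map j := by
    simpa using D.κ.naturality j
  have h2 : g ≫ D.κ.app (D.cone.obj Y) = D.κ.app S ≫ D.cone.map g := by
    simpa using D.κ.naturality g
  calc j ≫ D.κ.app T ≫ r ≫ D.cone.map g ≫ D.ρ.app Y
      = (j ≫ D.κ.app T) ≫ r ≫ D.cone.map g ≫ D.ρ.app Y := by simp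
    _ = D.κ.app S ≫ (D.cone.map j ≫ r) ≫ D.cone.map g ≫ D.ρ.app Y := by
        rw [h1]; simp
    _ = D.κ.app S ≫ D.cone.map g ≫ D.ρ.app Y := by rw [hr]; simp
    _ = (g ≫ D.κ.app (D.cone.obj Y)) ≫ D.ρ.app Y := by rw [h2]; simp
    _ = g := by rw [Category.assoc, D.ρ_κ_cone, Category.comp_id]

theorem Pbar_i1 (D : CCat 𝒞) {B A : 𝒞} (i : B ⟶ A) :
    D.Pbar (D.κ.app B) i (D.cof_κ B) ≫ D.i1 i = D.cone.map i :=
  (D.P_isPushout (D.κ.app B) i (D.cof_κ B)).inl_desc _ _ _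

theorem Pincl_i1 (D : CCat 𝒞) {B A : 𝒞} (i : B ⟶ A) :
    D.Pincl (D.κ.app B) i (D.cof_κ B) ≫ D.i1 i = D.κ.app A :=
  (D.P_isPushout (D.κ.app B) i (D.cof_κ B)).inr_desc _ _ _

/-- Existence of the coaction `μ`. -/
theorem exists_mu (D : CCat 𝒞) {B A : 𝒞} (i : B ⟶ D.cone.obj A) (hi : D.cof i) :
    ∃ μ, D.IsMu i hi μ := by
  set Q := D.P i i hi with hQ
  have hpo := D.P_isPushout (D.κ.app B) i (D.cof_κ B)
  have hnat : D.κ.app B ≫ D.cone.map i = i ≫ D.κ.app (D.cone.obj A) := by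
    simpa using (D.κ.naturality i).symm
  have hw : i ≫ D.Pbar i i hi = i ≫ D.Pincl i i hi := (D.P_isPushout i i hi).w
  have hcomm : D.κ.app B ≫ (D.cone.map i ≫ D.ρ.app A ≫ D.Pbar i i hi ≫ D.κ.app Q)
      = i ≫ (D.Pincl i i hi ≫ D.κ.app Q) := by
    calc D.κ.app B ≫ D.cone.map i ≫ D.ρ.app A ≫ D.Pbar i i hi ≫ D.κ.app Q
        = (D.κ.app B ≫ D.cone.map i) ≫ D.ρ.app A ≫ D.Pbar i i hi ≫ D.κ.app Q := by
          simp only [Category.assoc]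
      _ = i ≫ (D.κ.app (D.cone.obj A) ≫ D.ρ.app A) ≫ D.Pbar i i hi ≫ D.κ.app Q := by
          rw [hnat]; simp only [Category.assoc]
      _ = (i ≫ D.Pbar i i hi) ≫ D.κ.app Q := by
          rw [D.ρ_κ_cone]; simp only [Category.id_comp, Category.assoc]
      _ = i ≫ D.Pincl i i hi ≫ D.κ.app Q := by rw [hw, Category.assoc]
  set g := hpo.desc _ _ hcomm with hg
  obtain ⟨E, hE⟩ := D.extend_to_cone (D.i1 i) (D.cof_i1 i hi) g
  refine ⟨E, ?_, ?_⟩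
  · calc D.cone.map i ≫ E
        = (D.Pbar (D.κ.app B) i (D.cof_κ B) ≫ D.i1 i) ≫ E := by rw [D.Pbar_i1]
      _ = D.Pbar (D.κ.app B) i (D.cof_κ B) ≫ g := by rw [← hE]; exact Category.assoc _ _ _
      _ = _ := hpo.inl_desc _ _ _
  · calc D.κ.app (D.cone.obj A) ≫ E
        = (D.Pincl (D.κ.app B) i (D.cof_κ B) ≫ D.i1 i) ≫ E := by rw [D.Pincl_i1]
      _ = D.Pincl (D.κ.app B) i (D.cof_κ B) ≫ g := by rw [← hE]; exact Category.assoc _ _ _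
      _ = _ := hpo.inr_desc _ _ _

theorem homotopicRel_refl (D : CCat 𝒞) {B A X : 𝒞} (i : B ⟶ D.cone.obj A)
    (f : D.cone.obj A ⟶ X) : D.HomotopicRel i f f :=
  ⟨D.ρ.app A ≫ f, rfl, by rw [← Category.assoc, D.ρ_κ_cone]; simp⟩

theorem homotopicRel_symm (D : CCat 𝒞) {B A X : 𝒞} (i : B ⟶ D.cone.obj A)
    (hi : D.cof i) {f g : D.cone.obj A ⟶ X} (h : D.HomotopicRel i f g) :
    D.HomotopicRel i g f := by
  obtain ⟨F, hF1, hF2⟩ := h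
  obtain ⟨μ, hμ1, hμ2⟩ := D.exists_mu i hi
  have hcpo := D.cone_isPushout i i hi
  have hw : D.cone.map i ≫ F = D.cone.map i ≫ (D.ρ.app A ≫ f) := hF1
  set K := hcpo.desc _ _ hw with hK
  have hnatPbar : D.Pbar i i hi ≫ D.κ.app (D.P i i hi)
      = D.κ.app (D.cone.obj A) ≫ D.cone.map (D.Pbar i i hi) := by
    simpa using D.κ.naturality (D.Pbar i i hi)
  have hnatPincl : D.Pincl i i hi ≫ D.κ.app (D.P i i hi)
      = D.κ.app (D.cone.obj A) ≫ D.cone.map (D.Pincl i i hi) := by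
    simpa using D.κ.naturality (D.Pincl i i hi)
  have h3 : D.Pbar i i hi ≫ D.κ.app (D.P i i hi) ≫ K
      = D.κ.app (D.cone.obj A) ≫ F := by
    rw [← Category.assoc, hnatPbar, Category.assoc, hK, hcpo.inl_desc]
  have h4 : D.Pincl i i hi ≫ D.κ.app (D.P i i hi) ≫ K
      = D.κ.app (D.cone.obj A) ≫ D.ρ.app A ≫ f := by
    rw [← Category.assoc, hnatPincl, Category.assoc, hK, hcpo.inr_desc]
  refine ⟨μ ≫ K, ?_, ?_⟩
  · rw [← Category.assoc, hμ1]
    simp only [Category.assoc]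
    rw [h3, hF2]
  · rw [← Category.assoc, hμ2]
    simp only [Category.assoc]
    rw [h4, ← Category.assoc, D.ρ_κ_cone]
    simp

theorem homotopicRel_trans (D : CCat 𝒞) {B A X : 𝒞} (i : B ⟶ D.cone.obj A)
    (hi : D.cof i) {f g h : D.cone.obj A ⟶ X} (hfg : D.HomotopicRel i f g)
    (hgh : D.HomotopicRel i g h) : D.HomotopicRel i f h := by
  obtain ⟨R, hR1, hR2⟩ := D.homotopicRel_symm i hi hfg
  obtain ⟨G, hG1, hG2⟩ := hgh
  obtain ⟨μ, hμ1, hμ2⟩ := D.exists_mu i hi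
  have hcpo := D.cone_isPushout i i hi
  have hw : D.cone.map i ≫ R = D.cone.map i ≫ G := by rw [hR1, hG1]
  set K := hcpo.desc _ _ hw with hK
  have hnatPbar : D.Pbar i i hi ≫ D.κ.app (D.P i i hi)
      = D.κ.app (D.cone.obj A) ≫ D.cone.map (D.Pbar i i hi) := by
    simpa using D.κ.naturality (D.Pbar i i hi)
  have hnatPincl : D.Pincl i i hi ≫ D.κ.app (D.P i i hi)
      = D.κ.app (D.cone.obj A) ≫ D.cone.map (D.Pincl i i hi) := by
    simpa using D.κ.naturality (D.Pincl i i hi)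
  have h3 : D.Pbar i i hi ≫ D.κ.app (D.P i i hi) ≫ K
      = D.κ.app (D.cone.obj A) ≫ R := by
    rw [← Category.assoc, hnatPbar, Category.assoc, hK, hcpo.inl_desc]
  have h4 : D.Pincl i i hi ≫ D.κ.app (D.P i i hi) ≫ K
      = D.κ.app (D.cone.obj A) ≫ G := by
    rw [← Category.assoc, hnatPincl, Category.assoc, hK, hcpo.inr_desc]
  refine ⟨μ ≫ K, ?_, ?_⟩
  · rw [← Category.assoc, hμ1]
    simp only [Category.assoc]
    rw [h3, hR2]
  · rw [← Category.assoc, hμ2]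
    simp only [Category.assoc]
    rw [h4, hG2]

end CCat

/-- homotopy relative to a cofibration `i : B ↣ CA` is an equivalence
relation on the set of morphisms `CA ⟶ X` extending a fixed `u`. -/
theorem stmt_4 {𝒞 : Type u} [Category.{v} 𝒞] (D : CCat 𝒞) {B A X : 𝒞}
    (i : B ⟶ D.cone.obj A) (hi : D.cof i) (u : B ⟶ X) :
    Equivalence (fun f g : { f : D.cone.obj A ⟶ X // i ≫ f = u } =>
      D.HomotopicRel i f.1 g.1) :=
  ⟨fun f => D.homotopicRel_refl i f.1,
   fun h => D.homotopicRel_symm i hi h,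
   fun h h' => D.homotopicRel_trans i hi h h'⟩
end

section
/- In a C-category, for a cofibration i : B ↣ A, an object pair given by a cofibration f : Y ↣ X, and a morphism h : CA → Y, there is a group isomorphism θ_n : π_{n+2}^i(X, fh) → π_{n+1}^{(i₁,1)}((X,Y), (fhρ, h)), given by [F] ↦ [(F, hρⁿ)]. -/
set_option linter.unusedVariables false
/-!
Formalization of "Generalized Homotopy theory in Categories with a Natural Cone"
(Díaz, García Calcines).  A `CCat 𝒞` packages the data of a category with a natural
cone: a class of cofibrations, a cone functor `C`, natural transformations
`κ : 1 → C` and `ρ : CC → C`, together with chosen cofibrated pushouts, satisfying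
the axioms C1–C4 of the paper.
-/

open CategoryTheory CategoryTheory.Limits

universe v u

namespace CCat

variable {𝒞 : Type u} [Category.{v} 𝒞]

/-- Homotopy of pairs in the category of pairs `cof C`, expressed componentwise:
a homotopy rel the pair-cofibration `(jX, jY)` from `(F₂,F₁)` to `(G₂,G₁)` is a pair
of homotopies `(H₂,H₁)` which is a morphism of pairs (compatibility through the
structure morphism `σ` of the pair and `f : Y ↣ X`). -/
def PairHomotopic (D : CCat 𝒞) {SX AX SY AY X Y : 𝒞} (f : Y ⟶ X)
    (jX : SX ⟶ D.cone.obj AX) (jY : SY ⟶ D.cone.obj AY)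
    (σ : D.cone.obj (D.cone.obj AY) ⟶ D.cone.obj (D.cone.obj AX))
    (F₂ G₂ : D.cone.obj (D.cone.obj AX) ⟶ X)
    (F₁ G₁ : D.cone.obj (D.cone.obj AY) ⟶ Y) : Prop :=
  ∃ H₂ H₁, D.cone.map σ ≫ H₂ = H₁ ≫ f ∧
    D.IsRelHomotopy (D.i1 jX) F₂ G₂ H₂ ∧ D.IsRelHomotopy (D.i1 jY) F₁ G₁ H₁

/-- Elements of the relative homotopy group of a pair, expressed componentwise:
`(F₂,F₁)` is a morphism of pairs (through `σ` and `f`) whose components are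
extensions over the two components of the iterated pair-cofibration. -/
def PairExt (D : CCat 𝒞) {SX AX SY AY X Y : 𝒞} (f : Y ⟶ X)
    (jX : SX ⟶ D.cone.obj AX) (jY : SY ⟶ D.cone.obj AY)
    (σ : D.cone.obj (D.cone.obj AY) ⟶ D.cone.obj (D.cone.obj AX))
    (gX : D.cone.obj AX ⟶ X) (gY : D.cone.obj AY ⟶ Y)
    (F₂ : D.cone.obj (D.cone.obj AX) ⟶ X)
    (F₁ : D.cone.obj (D.cone.obj AY) ⟶ Y) : Prop :=
  σ ≫ F₂ = F₁ ≫ f ∧ D.IsRelHomotopy jX gX gX F₂ ∧ D.IsRelHomotopy jY gY gY F₁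

end CCat

namespace CCat

variable {𝒞 : Type u} [Category.{v} 𝒞]

lemma sigInl_i1 (D : CCat 𝒞) {B A : 𝒞} (j : B ⟶ A) :
    D.sigInl j ≫ D.i1 j = D.cone.map j :=
  (D.P_isPushout (D.κ.app B) j (D.cof_κ B)).inl_desc _ _ _

lemma sigInr_i1 (D : CCat 𝒞) {B A : 𝒞} (j : B ⟶ A) :
    D.sigInr j ≫ D.i1 j = D.κ.app A :=
  (D.P_isPushout (D.κ.app B) j (D.cof_κ B)).inr_desc _ _ _

/-- `Cⁿκ` factors through the iterated relative cofibration. -/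
lemma factor_iterCof1 (D : CCat 𝒞) {B A : 𝒞} (i : B ⟶ A) :
    ∀ m : ℕ, ∃ t : D.cpow A m ⟶ (D.iterCof1 (D.i1 i) m).1,
      t ≫ (D.iterCof1 (D.i1 i) m).2 = D.cpowKappa A m
  | 0 => ⟨D.sigInr i, D.sigInr_i1 i⟩
  | m + 1 => by
    obtain ⟨t, ht⟩ := factor_iterCof1 D i m
    refine ⟨D.cone.map t ≫ D.sigInl (D.iterCof1 (D.i1 i) m).2, ?_⟩
    show (D.cone.map t ≫ D.sigInl _) ≫ D.i1 _ = D.cone.map (D.cpowKappa A m)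
    erw [Category.assoc, D.sigInl_i1, ← CategoryTheory.Functor.map_comp, ht]

lemma cpowKappa_rpow (D : CCat 𝒞) (A : 𝒞) :
    ∀ m : ℕ, D.cone.map (D.cpowKappa A m) ≫ D.rpow A (m + 1) = D.rpow A m
  | 0 => by
    show D.cone.map (D.κ.app A) ≫ D.ρ.app A ≫ D.rpow A 0 = D.rpow A 0
    erw [← Category.assoc, D.ρ_cone_κ]
    exact Category.id_comp _
  | m + 1 => by
    show D.cone.map (D.cone.map (D.cpowKappa A m)) ≫
        D.ρ.app (D.cpow A (m + 1)) ≫ D.rpow A (m + 1) = D.rpow A (m + 1)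
    have hnat : D.cone.map (D.cone.map (D.cpowKappa A m)) ≫ D.ρ.app (D.cpow A (m + 1))
        = D.ρ.app (D.cpow A m) ≫ D.cone.map (D.cpowKappa A m) := by
      simpa using D.ρ.naturality (D.cpowKappa A m)
    erw [← Category.assoc, hnat, Category.assoc, cpowKappa_rpow D A m]
    rfl

lemma restrict_kappa (D : CCat 𝒞) {B A X : 𝒞} (i : B ⟶ A) (m : ℕ)
    (F : D.cone.obj (D.cone.obj (D.cpow A m)) ⟶ X)
    (g : D.cone.obj (D.cpow A m) ⟶ X)
    (hF : D.cone.map (D.iterCof1 (D.i1 i) m).2 ≫ F =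
      D.cone.map (D.iterCof1 (D.i1 i) m).2 ≫ D.ρ.app (D.cpow A m) ≫ g) :
    D.cone.map (D.cpowKappa A m) ≫ F =
      D.cone.map (D.cpowKappa A m) ≫ D.ρ.app (D.cpow A m) ≫ g := by
  obtain ⟨t, ht⟩ := D.factor_iterCof1 i m
  have hk : D.cone.map (D.cpowKappa A m) =
      D.cone.map t ≫ D.cone.map (D.iterCof1 (D.i1 i) m).2 := by
    rw [← D.cone.map_comp]; exact congrArg D.cone.map ht.symm
  exact (congrArg (· ≫ F) hk).trans ((Category.assoc _ _ _).trans
    ((congrArg (D.cone.map t ≫ ·) hF).trans ((Category.assoc _ _ _).symm.trans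
      (congrArg (· ≫ D.ρ.app (D.cpow A m) ≫ g) hk.symm))))

lemma sigma_ext (D : CCat 𝒞) {B A X : 𝒞} (i : B ⟶ A) (n : ℕ)
    (k : D.cone.obj A ⟶ X)
    (F : D.cone.obj (D.cone.obj (D.cpow A (n + 1))) ⟶ X)
    (hF : D.cone.map (D.iterCof1 (D.i1 i) (n + 1)).2 ≫ F =
      D.cone.map (D.iterCof1 (D.i1 i) (n + 1)).2 ≫ D.ρ.app (D.cpow A (n + 1)) ≫
        (D.rpow A (n + 1) ≫ k)) :
    D.cone.map (D.cone.map (D.cpowKappa A n)) ≫ F = D.rpow A (n + 1) ≫ k := by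
  have h1 := D.restrict_kappa i (n + 1) F (D.rpow A (n + 1) ≫ k) hF
  calc D.cone.map (D.cone.map (D.cpowKappa A n)) ≫ F
      = D.cone.map (D.cone.map (D.cpowKappa A n)) ≫ D.ρ.app (D.cpow A (n + 1)) ≫
          D.rpow A (n + 1) ≫ k := h1
    _ = (D.cone.map (D.cone.map (D.cpowKappa A n)) ≫ D.rpow A (n + 2)) ≫ k := by
        rw [show D.rpow A (n + 2) = D.ρ.app (D.cpow A (n + 1)) ≫ D.rpow A (n + 1) from rfl]
        exact ((Category.assoc _ _ _).trans
          (congrArg (D.cone.map (D.cone.map (D.cpowKappa A n)) ≫ ·) (Category.assoc _ _ _))).symm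
    _ = (D.rpow A (n + 1) ≫ k : D.cone.obj (D.cone.obj (D.cpow A n)) ⟶ X) := by
        have h3 : D.cone.map (D.cone.map (D.cpowKappa A n)) ≫ D.rpow A (n + 2) =
            D.rpow A (n + 1) := D.cpowKappa_rpow A (n + 1)
        rw [h3]

lemma sigma_ext2 (D : CCat 𝒞) {B A X : 𝒞} (i : B ⟶ A) (n : ℕ) (k : D.cone.obj A ⟶ X)
    (F : D.cone.obj (D.cone.obj (D.cpow A (n + 1))) ⟶ X)
    (H : D.cone.obj (D.cone.obj (D.cpow A (n + 2))) ⟶ X)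
    (hF : D.cone.map (D.iterCof1 (D.i1 i) (n + 1)).2 ≫ F =
      D.cone.map (D.iterCof1 (D.i1 i) (n + 1)).2 ≫ D.ρ.app (D.cpow A (n + 1)) ≫
        (D.rpow A (n + 1) ≫ k))
    (hH : D.cone.map (D.iterCof1 (D.i1 i) (n + 2)).2 ≫ H =
      D.cone.map (D.iterCof1 (D.i1 i) (n + 2)).2 ≫ D.ρ.app (D.cpow A (n + 2)) ≫ F) :
    D.cone.map (D.cone.map (D.cpowKappa A (n + 1))) ≫ H = D.rpow A (n + 2) ≫ k := by
  have h1 := D.restrict_kappa i (n + 2) H F hH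
  have hnat : D.cone.map (D.cone.map (D.cpowKappa A (n + 1))) ≫ D.ρ.app (D.cpow A (n + 2))
      = D.ρ.app (D.cpow A (n + 1)) ≫ D.cone.map (D.cpowKappa A (n + 1)) := by
    simpa using D.ρ.naturality (D.cpowKappa A (n + 1))
  have h2 := D.sigma_ext i n k F hF
  calc D.cone.map (D.cone.map (D.cpowKappa A (n + 1))) ≫ H
      = D.cone.map (D.cone.map (D.cpowKappa A (n + 1))) ≫ D.ρ.app (D.cpow A (n + 2)) ≫ F := h1
    _ = D.ρ.app (D.cpow A (n + 1)) ≫ D.cone.map (D.cpowKappa A (n + 1)) ≫ F := by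
        erw [← Category.assoc, hnat, Category.assoc]
    _ = D.ρ.app (D.cpow A (n + 1)) ≫ D.rpow A (n + 1) ≫ k := by
        rw [show D.cone.map (D.cpowKappa A (n + 1)) ≫ F
            = D.cone.map (D.cone.map (D.cpowKappa A n)) ≫ F from rfl, h2]
        rfl
    _ = (D.rpow A (n + 2) ≫ k : D.cone.obj (D.cone.obj (D.cpow A (n + 1))) ⟶ X) := by
        exact (Category.assoc _ _ _).symm

lemma split_iter_id (D : CCat 𝒞) (A : 𝒞) :
    ∀ m : ℕ, ∃ s : D.cone.obj (D.cpow A m) ⟶ (D.iterCof1 (D.i1 (𝟙 A)) m).1,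
      s ≫ (D.iterCof1 (D.i1 (𝟙 A)) m).2 = 𝟙 (D.cone.obj (D.cpow A m))
  | 0 => ⟨D.sigInl (𝟙 A), by
      show D.sigInl (𝟙 A) ≫ D.i1 (𝟙 A) = 𝟙 (D.cone.obj A)
      rw [D.sigInl_i1, CategoryTheory.Functor.map_id]⟩
  | m + 1 => by
    obtain ⟨s, hs⟩ := split_iter_id D A m
    refine ⟨D.cone.map s ≫ D.sigInl (D.iterCof1 (D.i1 (𝟙 A)) m).2, ?_⟩
    show (D.cone.map s ≫ D.sigInl _) ≫ D.i1 _ = 𝟙 _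
    rw [Category.assoc, D.sigInl_i1, ← CategoryTheory.Functor.map_comp, hs, CategoryTheory.Functor.map_id]

lemma cancel_Y (D : CCat 𝒞) {A Z : 𝒞} (m : ℕ)
    {u v : D.cone.obj (D.cone.obj (D.cpow A m)) ⟶ Z}
    (huv : D.cone.map (D.iterCof1 (D.i1 (𝟙 A)) m).2 ≫ u =
           D.cone.map (D.iterCof1 (D.i1 (𝟙 A)) m).2 ≫ v) : u = v := by
  obtain ⟨s, hs⟩ := D.split_iter_id A m
  have h2 : D.cone.map s ≫ D.cone.map (D.iterCof1 (D.i1 (𝟙 A)) m).2 = 𝟙 _ := by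
    rw [← CategoryTheory.Functor.map_comp, hs, CategoryTheory.Functor.map_id]
  calc u = (D.cone.map s ≫ D.cone.map (D.iterCof1 (D.i1 (𝟙 A)) m).2) ≫ u := by
        rw [h2, Category.id_comp]
    _ = (D.cone.map s ≫ D.cone.map (D.iterCof1 (D.i1 (𝟙 A)) m).2) ≫ v := by
        rw [Category.assoc, Category.assoc, huv]
    _ = v := by rw [h2, Category.id_comp]

lemma ext_unique_Y (D : CCat 𝒞) {A Y : 𝒞} (m : ℕ) (g : D.cone.obj (D.cpow A m) ⟶ Y)
    (F : D.cone.obj (D.cone.obj (D.cpow A m)) ⟶ Y)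
    (hF : D.cone.map (D.iterCof1 (D.i1 (𝟙 A)) m).2 ≫ F =
      D.cone.map (D.iterCof1 (D.i1 (𝟙 A)) m).2 ≫ D.ρ.app (D.cpow A m) ≫ g) :
    F = D.ρ.app (D.cpow A m) ≫ g :=
  D.cancel_Y m hF

lemma const_relHomotopy (D : CCat 𝒞) {S W X : 𝒞} (j : S ⟶ D.cone.obj W)
    (T : D.cone.obj (D.cone.obj W) ⟶ X) :
    D.IsRelHomotopy (D.i1 j) T T (D.ρ.app (D.cone.obj W) ≫ T) := by
  constructor
  · rfl
  · rw [← Category.assoc, D.ρ_κ_cone]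
    simp

lemma mu_comp_left (D : CCat 𝒞) {B A' Z : 𝒞} (j : B ⟶ D.cone.obj A') (hj : D.cof j)
    (μ : D.cone.obj (D.cone.obj A') ⟶ D.cone.obj (D.P j j hj)) (hμ : D.IsMu j hj μ)
    (K : D.cone.obj (D.P j j hj) ⟶ Z) :
    D.κ.app (D.cone.obj A') ≫ μ ≫ K =
      D.κ.app (D.cone.obj A') ≫ D.cone.map (D.Pincl j j hj) ≫ K := by
  have hnat : D.Pincl j j hj ≫ D.κ.app (D.P j j hj) =
      D.κ.app (D.cone.obj A') ≫ D.cone.map (D.Pincl j j hj) := by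
    simpa using D.κ.naturality (D.Pincl j j hj)
  rw [← Category.assoc, hμ.2, hnat, Category.assoc]

lemma mu_comp_cmap (D : CCat 𝒞) {B A' Z : 𝒞} (j : B ⟶ D.cone.obj A') (hj : D.cof j)
    (μ : D.cone.obj (D.cone.obj A') ⟶ D.cone.obj (D.P j j hj)) (hμ : D.IsMu j hj μ)
    (K : D.cone.obj (D.P j j hj) ⟶ Z) :
    D.cone.map j ≫ μ ≫ K =
      D.cone.map j ≫ D.ρ.app A' ≫ D.κ.app (D.cone.obj A') ≫
        D.cone.map (D.Pbar j j hj) ≫ K := by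
  have hnat : D.Pbar j j hj ≫ D.κ.app (D.P j j hj) =
      D.κ.app (D.cone.obj A') ≫ D.cone.map (D.Pbar j j hj) := by
    simpa using D.κ.naturality (D.Pbar j j hj)
  rw [← Category.assoc, hμ.1]
  simp only [Category.assoc]
  rw [← Category.assoc (D.Pbar j j hj), hnat, Category.assoc]

end CCat

/-- for a cofibration `i : B ↣ A`, a pair given by a cofibration
`f : Y ↣ X` and `h : CA ⟶ Y`, there is a group isomorphism
`θ : π_{n+2}^i(X, fh) → π_{n+1}^{(i₁,1)}((X,Y), (fhρ, h))`, `[F] ↦ [(F, hρⁿ)]`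
(stated for all indices `n+1 ≥ 2` for which both groups are defined; the homotopy
groups of the pair category are expressed componentwise). -/
theorem stmt_14 {𝒞 : Type u} [Category.{v} 𝒞] (D : CCat 𝒞) {B A X Y : 𝒞}
    (i : B ⟶ A) (hi : D.cof i) (f : Y ⟶ X) (hf : D.cof f)
    (h : D.cone.obj A ⟶ Y) (n : ℕ) :
    -- the first component of the iterated pair-cofibration `((i₁,1))_{n+1}`
    let jX := (D.iterCof1 (D.i1 i) (n + 1)).2
    -- the second component, iterating `1_A`
    let jY := (D.iterCof1 (D.i1 (𝟙 A)) n).2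
    -- the structure morphism of the iterated cone of the pair `(CA, A)`
    let σ : D.cone.obj (D.cone.obj (D.cpow A n)) ⟶
        D.cone.obj (D.cone.obj (D.cpow A (n + 1))) :=
      D.cone.map (D.cone.map (D.cpowKappa A n))
    -- base morphisms
    let gX : D.cone.obj (D.cpow A (n + 1)) ⟶ X := D.rpow A (n + 1) ≫ h ≫ f
    let gY : D.cone.obj (D.cpow A n) ⟶ Y := D.rpow A n ≫ h
    -- the second component `hρⁿ` of `θ F`
    let e : D.cone.obj (D.cone.obj (D.cpow A n)) ⟶ Y := D.rpow A (n + 1) ≫ h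
    -- `θ` maps elements to elements of the pair group
    (∀ F, D.IsRelHomotopy jX gX gX F → D.PairExt f jX jY σ gX gY F e) ∧
    -- `θ` is well defined and injective on homotopy classes
    (∀ F F', D.IsRelHomotopy jX gX gX F → D.IsRelHomotopy jX gX gX F' →
      (D.HomotopicRel (D.i1 jX) F F' ↔ D.PairHomotopic f jX jY σ F F' e e)) ∧
    -- `θ` is surjective
    (∀ F₂ F₁, D.PairExt f jX jY σ gX gY F₂ F₁ →
      ∃ F, D.IsRelHomotopy jX gX gX F ∧ D.PairHomotopic f jX jY σ F F₂ e F₁) ∧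
    -- `θ` is a homomorphism of groups (pair composition is componentwise)
    (∀ μX μY,
      D.IsMu jX (D.cof_iterCof1 (D.i1 i) (D.cof_i1 i hi) (n + 1)) μX →
      D.IsMu jY (D.cof_iterCof1 (D.i1 (𝟙 A)) (D.cof_i1 (𝟙 A) (D.cof_id A)) n) μY →
      ∀ F G S₂ S₁,
        D.IsRelHomotopy jX gX gX F → D.IsRelHomotopy jX gX gX G →
        D.IsStar jX (D.cof_iterCof1 (D.i1 i) (D.cof_i1 i hi) (n + 1)) μX gX F G S₂ →
        D.IsStar jY (D.cof_iterCof1 (D.i1 (𝟙 A)) (D.cof_i1 (𝟙 A) (D.cof_id A)) n)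
          μY gY e e S₁ →
        D.PairHomotopic f jX jY σ S₂ S₂ e S₁) := by
  
  intro jX jY σ gX gY e
  have e_eq : (D.rpow A (n + 1) ≫ h : D.cone.obj (D.cone.obj (D.cpow A n)) ⟶ Y)
      = D.ρ.app (D.cpow A n) ≫ D.rpow A n ≫ h := Category.assoc _ _ _
  have heY : D.IsRelHomotopy jY gY gY e := by
    constructor
    · show D.cone.map jY ≫ D.rpow A (n + 1) ≫ h =
        D.cone.map jY ≫ D.ρ.app (D.cpow A n) ≫ D.rpow A n ≫ h
      rw [e_eq]
    · show D.κ.app (D.cone.obj (D.cpow A n)) ≫ D.rpow A (n + 1) ≫ h = D.rpow A n ≫ h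
      rw [e_eq, ← Category.assoc, D.ρ_κ_cone]
      simp
      rfl
  have compat_const : ∀ T : D.cone.obj (D.cone.obj (D.cpow A (n + 1))) ⟶ X,
      D.IsRelHomotopy jX gX gX T →
      D.cone.map σ ≫ (D.ρ.app (D.cone.obj (D.cpow A (n + 1))) ≫ T) =
        (D.ρ.app (D.cone.obj (D.cpow A n)) ≫ e) ≫ f := by
    intro T hT
    have h2 := D.sigma_ext i n (h ≫ f) T hT.1
    have hnat : D.cone.map (D.cone.map (D.cone.map (D.cpowKappa A n))) ≫
        D.ρ.app (D.cone.obj (D.cpow A (n + 1))) =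
        D.ρ.app (D.cone.obj (D.cpow A n)) ≫ D.cone.map (D.cone.map (D.cpowKappa A n)) :=
      D.ρ.naturality (D.cpowKappa A (n + 1))
    calc D.cone.map σ ≫ D.ρ.app (D.cone.obj (D.cpow A (n + 1))) ≫ T
        = (D.cone.map (D.cone.map (D.cone.map (D.cpowKappa A n))) ≫
            D.ρ.app (D.cone.obj (D.cpow A (n + 1)))) ≫ T := (Category.assoc _ _ _).symm
      _ = (D.ρ.app (D.cone.obj (D.cpow A n)) ≫
            D.cone.map (D.cone.map (D.cpowKappa A n))) ≫ T := by rw [hnat]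
      _ = D.ρ.app (D.cone.obj (D.cpow A n)) ≫
            D.cone.map (D.cone.map (D.cpowKappa A n)) ≫ T := Category.assoc _ _ _
      _ = D.ρ.app (D.cone.obj (D.cpow A n)) ≫ D.rpow A (n + 1) ≫ h ≫ f := by rw [h2]; rfl
      _ = (D.ρ.app (D.cone.obj (D.cpow A n)) ≫ e) ≫ f := by
          show _ = (D.ρ.app (D.cone.obj (D.cpow A n)) ≫ D.rpow A (n + 1) ≫ h) ≫ f
          exact ((Category.assoc _ _ _).trans
            (congrArg (D.ρ.app (D.cone.obj (D.cpow A n)) ≫ ·) (Category.assoc _ _ _))).symm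
  refine ⟨?_, ?_, ?_, ?_⟩
  · -- θ maps elements to elements
    intro F hF
    refine ⟨?_, hF, heY⟩
    show D.cone.map (D.cone.map (D.cpowKappa A n)) ≫ F = (D.rpow A (n + 1) ≫ h) ≫ f
    rw [D.sigma_ext i n (h ≫ f) F hF.1, ← Category.assoc]
  · -- well defined and injective
    intro F F' hF hF'
    constructor
    · rintro ⟨H, hH⟩
      refine ⟨H, D.ρ.app (D.cone.obj (D.cpow A n)) ≫ e, ?_, hH, D.const_relHomotopy jY e⟩
      show D.cone.map σ ≫ H =
        (D.ρ.app (D.cone.obj (D.cpow A n)) ≫ D.rpow A (n + 1) ≫ h) ≫ f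
      rw [show D.cone.map σ ≫ H =
          D.cone.map (D.cone.map (D.cpowKappa A (n + 1))) ≫ H from rfl,
        D.sigma_ext2 i n (h ≫ f) F H hF.1 hH.1]
      rw [show D.rpow A (n + 2) = D.ρ.app (D.cone.obj (D.cpow A n)) ≫ D.rpow A (n + 1)
        from rfl]
      exact (Category.assoc _ _ _).trans ((congrArg (D.ρ.app (D.cone.obj (D.cpow A n)) ≫ ·)
        (Category.assoc _ _ _).symm).trans (Category.assoc _ _ _).symm)
    · rintro ⟨H₂, H₁, _, h2, _⟩
      exact ⟨H₂, h2⟩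
  · -- surjective
    rintro F₂ F₁ ⟨hcompat, hF₂, hF₁⟩
    have hF₁e : F₁ = e := by
      have h1 := D.ext_unique_Y n gY F₁ hF₁.1
      rw [h1]
      exact e_eq.symm
    refine ⟨F₂, hF₂, D.ρ.app (D.cone.obj (D.cpow A (n + 1))) ≫ F₂,
      D.ρ.app (D.cone.obj (D.cpow A n)) ≫ e, compat_const F₂ hF₂,
      D.const_relHomotopy jX F₂, ?_⟩
    rw [hF₁e]
    exact D.const_relHomotopy jY e
  · -- homomorphism
    rintro μX μY hμX hμY F G S₂ S₁ hF hG
      ⟨R2, K2, ⟨K20, hQ20, hR2⟩, hQ2, hS2⟩ ⟨R1, K1, ⟨K10, hQ10, hR1⟩, hQ1, hS1⟩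
    -- the Y-side composite is the constant map e
    have μY_eq := D.cancel_Y n hμY.1
    have postMuY : ∀ {Z : 𝒞} (K : _ ⟶ Z) (u : D.cone.obj (D.cone.obj (D.cpow A n)) ⟶ Z),
        D.cone.map (D.Pbar jY jY (D.cof_iterCof1 (D.i1 (𝟙 A))
          (D.cof_i1 (𝟙 A) (D.cof_id A)) n)) ≫ K = u →
        μY ≫ K = D.ρ.app (D.cpow A n) ≫ D.κ.app (D.cone.obj (D.cpow A n)) ≫ u := by
      intro Z K u hu
      have hnat : D.Pbar jY jY (D.cof_iterCof1 (D.i1 (𝟙 A))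
            (D.cof_i1 (𝟙 A) (D.cof_id A)) n) ≫
            D.κ.app (D.P jY jY (D.cof_iterCof1 (D.i1 (𝟙 A))
              (D.cof_i1 (𝟙 A) (D.cof_id A)) n)) =
          D.κ.app (D.cone.obj (D.cpow A n)) ≫ D.cone.map (D.Pbar jY jY
            (D.cof_iterCof1 (D.i1 (𝟙 A)) (D.cof_i1 (𝟙 A) (D.cof_id A)) n)) := by
        simpa using D.κ.naturality (D.Pbar jY jY (D.cof_iterCof1 (D.i1 (𝟙 A))
          (D.cof_i1 (𝟙 A) (D.cof_id A)) n))
      rw [μY_eq]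
      simp only [Category.assoc]
      rw [← Category.assoc (D.Pbar jY jY _), hnat, Category.assoc, hu]
    have hκe : D.κ.app (D.cone.obj (D.cpow A n)) ≫ e = gY := heY.2
    have hR1e : R1 = e := by
      rw [hR1, postMuY K10 e hQ10.1, hκe]
      exact e_eq.symm
    have hS1e : S₁ = e := by
      rw [hS1, postMuY K1 R1 hQ1.1, hR1e, hκe]
      exact e_eq.symm
    -- the X-side composite is an extension of gX
    have hκR2 : D.κ.app (D.cone.obj (D.cpow A (n + 1))) ≫ R2 = gX := by
      rw [hR2, D.mu_comp_left jX _ μX hμX K20, hQ20.2, ← Category.assoc, D.ρ_κ_cone]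
      simp
    have hS₂ext : D.IsRelHomotopy jX gX gX S₂ := by
      constructor
      · rw [hS2, D.mu_comp_cmap jX _ μX hμX K2, hQ2.1, hκR2]
      · rw [hS2, D.mu_comp_left jX _ μX hμX K2, hQ2.2]
        exact hG.2
    refine ⟨D.ρ.app (D.cone.obj (D.cpow A (n + 1))) ≫ S₂,
      D.ρ.app (D.cone.obj (D.cpow A n)) ≫ e, compat_const S₂ hS₂ext,
      D.const_relHomotopy jX S₂, ?_⟩
    rw [hS1e]
    exact D.const_relHomotopy jY e
end
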